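/- arXiv:1810.06240 — 6 statements merged into one kernel-verified Lean document; each statement's English description precedes it below -/
import Mathlib

section
/- For all integers T, U ≥ 1 and every integer L with max(T, U) ≤ L ≤ T + U − 1, the number of warping paths of order T×U of length exactly L equals binom(L−1, L−T) · binom(T−1, L−U). -/
/-- A single step of a warping path: diagonal, vertical, or horizontal. -/
def WStep (a b : ℕ × ℕ) : Prop :=
  b = (a.1 + 1, a.2 + 1) ∨ b = (a.1, a.2 + 1) ∨ b = (a.1 + 1, a.2)

/-- `l` is the enumeration `p₁, …, p_L` of a warping path of order `T × U`:
it is nonempty, starts at `(1,1)`, ends at `(T,U)`, and consecutive entries differ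
by a warping step. -/
def IsWarpingList (T U : ℕ) (l : List (ℕ × ℕ)) : Prop :=
  l ≠ [] ∧ l.head? = some (1, 1) ∧ l.getLast? = some (T, U) ∧ l.Chain' WStep

/-- `p` (as a set of pairs) is a warping path of order `T × U`. -/
def IsWarpingPath (T U : ℕ) (p : Finset (ℕ × ℕ)) : Prop :=
  ∃ l : List (ℕ × ℕ), IsWarpingList T U l ∧ l.toFinset = p

/-!
A warping path of length `L` is traced out by a sequence of `L - 1` steps, each one of
`(1, 1)`, `(0, 1)`, `(1, 0)`, and since its points strictly increase along the path, the set of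
points determines that sequence. Going from `(1, 1)` to `(T, U)` in `L - 1` steps forces exactly
`L - T` steps `(0, 1)` and `L - U` steps `(1, 0)`. Choosing the positions of these `2L - T - U`
non-diagonal steps and then which of them are `(0, 1)` gives
`C(L - 1, 2L - T - U) * C(2L - T - U, L - T) = C(L - 1, L - T) * C(T - 1, L - U)`.
-/

open Finset

namespace List

variable {α β : Type*}

theorem isChain_scanl {R : β → β → Prop} {f : β → α → β} {l : List α}
    (h : ∀ b, ∀ a ∈ l, R b (f b a)) (b : β) : (l.scanl f b).IsChain R := by
  induction l generalizing b with
  | nil => exact isChain_singleton b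
  | cons a l ih =>
    rw [scanl_cons, isChain_cons]
    refine ⟨?_, ih (fun b a ha => h b a (mem_cons_of_mem _ ha)) _⟩
    simp only [head?_scanl, Option.mem_def, Option.some_inj]
    rintro _ rfl
    exact h b a mem_cons_self

theorem scanl_injective {f : β → α → β} (hf : ∀ b, Function.Injective (f b)) (b : β) :
    Function.Injective (scanl f b) := by
  intro l₁ l₂ h
  induction l₁ generalizing l₂ b with
  | nil => cases l₂ <;> simp_all
  | cons a l₁ ih =>
    cases l₂ with
    | nil => simp_all
    | cons a' l₂ =>
      simp only [scanl_cons, cons.injEq, true_and] at h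
      obtain rfl : a = a' := hf b (by simpa using congrArg head? h)
      rw [ih _ h]

theorem exists_eq_scanl_of_isChain {R : β → β → Prop} {f : β → α → β} {S : α → Prop}
    (hR : ∀ x y, R x y → ∃ a, S a ∧ y = f x a) {l : List β} (hl : l.IsChain R) {b : β}
    (hb : l.head? = some b) : ∃ s : List α, (∀ a ∈ s, S a) ∧ l = s.scanl f b := by
  induction l generalizing b with
  | nil => simp at hb
  | cons x l ih =>
    obtain rfl : x = b := by simpa using hb
    cases l with
    | nil => exact ⟨[], by simp, rfl⟩
    | cons y l =>
      rw [isChain_cons_cons] at hl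
      obtain ⟨a, ha, rfl⟩ := hR x y hl.1
      obtain ⟨s, hs, hys⟩ := ih hl.2 rfl
      exact ⟨a :: s, by simp_all, by rw [scanl_cons, ← hys]⟩

theorem sortedLT_scanl_add {M : Type*} [AddCommMonoid M] [PartialOrder M]
    [IsOrderedCancelAddMonoid M] {s : List M} (hs : ∀ x ∈ s, 0 < x) (b : M) :
    (s.scanl (· + ·) b).SortedLT :=
  sortedLT_iff_isChain.mpr <| isChain_scanl (fun b x hx => lt_add_of_pos_right b (hs x hx)) b

end List

def warpSteps : Finset (ℕ × ℕ) := {(1, 1), (0, 1), (1, 0)}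

lemma wStep_iff {a b : ℕ × ℕ} : WStep a b ↔ ∃ x ∈ warpSteps, b = a + x := by
  simp [WStep, warpSteps, or_and_right, exists_or, Prod.ext_iff]

lemma pos_of_mem_warpSteps {x : ℕ × ℕ} (hx : x ∈ warpSteps) : 0 < x := by
  simp only [warpSteps, mem_insert, mem_singleton] at hx
  rcases hx with rfl | rfl | rfl <;> simp [Prod.lt_iff]

lemma sum_add_count_eq {s : List (ℕ × ℕ)} (hs : ∀ x ∈ s, x ∈ warpSteps) :
    s.sum + (s.count (0, 1), s.count (1, 0)) = (s.length, s.length) := by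
  induction s with
  | nil => rfl
  | cons x s ih =>
    have hx := hs x List.mem_cons_self
    have := ih fun y hy => hs y (List.mem_cons_of_mem x hy)
    simp only [warpSteps, mem_insert, mem_singleton] at hx
    simp only [Prod.ext_iff, Prod.fst_add, Prod.snd_add] at this ⊢
    rcases hx with rfl | rfl | rfl <;> simp <;> omega

def stepLists : ℕ → Finset (List (ℕ × ℕ))
  | 0 => {[]}
  | n + 1 => (warpSteps ×ˢ stepLists n).image fun p => p.1 :: p.2

lemma mem_stepLists {n : ℕ} {s : List (ℕ × ℕ)} :
    s ∈ stepLists n ↔ s.length = n ∧ ∀ x ∈ s, x ∈ warpSteps := by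
  induction n generalizing s with
  | zero => cases s <;> simp [stepLists]
  | succ n ih =>
    cases s with
    | nil => simp [stepLists]
    | cons x s => simp [stepLists, ih, and_comm, and_left_comm]

lemma card_filter_stepLists_succ (P : List (ℕ × ℕ) → Prop) [DecidablePred P] (n : ℕ) :
    #{s ∈ stepLists (n + 1) | P s} = ∑ x ∈ warpSteps, #{t ∈ stepLists n | P (x :: t)} := by
  have hcons : Function.Injective fun p : (ℕ × ℕ) × List (ℕ × ℕ) => p.1 :: p.2 :=
    fun p q h => Prod.ext (List.cons.inj h).1 (List.cons.inj h).2
  rw [stepLists, filter_image, card_image_of_injective _ hcons, card_filter, sum_product]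
  simp_rw [card_filter]

lemma card_filter_stepLists_count (n h v : ℕ) :
    #{s ∈ stepLists n | s.count (1, 0) = h ∧ s.count (0, 1) = v} =
      n.choose (h + v) * (h + v).choose v := by
  induction n generalizing h v with
  | zero =>
    rcases h with _ | h <;> rcases v with _ | v <;>
      simp [stepLists, filter_singleton, Nat.choose_eq_zero_iff]
  | succ n ih =>
    have hrec : #{s ∈ stepLists (n + 1) | s.count (1, 0) = h ∧ s.count (0, 1) = v} =
        #{s ∈ stepLists n | s.count (1, 0) = h ∧ s.count (0, 1) = v} +
        #{s ∈ stepLists n | s.count (1, 0) = h ∧ s.count (0, 1) + 1 = v} +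
        #{s ∈ stepLists n | s.count (1, 0) + 1 = h ∧ s.count (0, 1) = v} := by
      simp [card_filter_stepLists_succ, warpSteps, List.count_cons, add_assoc]
    rw [hrec]
    rcases h with _ | h <;> rcases v with _ | v
    · simp [ih]
    · simpa [ih, Nat.choose_succ_succ'] using Nat.add_comm _ _
    · simpa [ih, Nat.choose_succ_succ'] using Nat.add_comm _ _
    · simp only [ih, Nat.add_right_cancel_iff]
      rw [show h + 1 + (v + 1) = h + v + 1 + 1 by omega, show h + 1 + v = h + v + 1 by omega,
        show h + (v + 1) = h + v + 1 by omega, Nat.choose_succ_succ' n, Nat.choose_succ_succ' _ v]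
      ring

lemma isWarpingList_iff {T U : ℕ} {l : List (ℕ × ℕ)} :
    IsWarpingList T U l ↔ ∃ s : List (ℕ × ℕ), (∀ x ∈ s, x ∈ warpSteps) ∧
      (1, 1) + s.sum = (T, U) ∧ l = s.scanl (· + ·) (1, 1) := by
  have hlast (s : List (ℕ × ℕ)) : (s.scanl (· + ·) (1, 1)).getLast? = some ((1, 1) + s.sum) :=
    List.getLast?_scanl.trans (congrArg some List.foldl_eq_apply_foldr)
  constructor
  · rintro ⟨-, hhead, hend, hchain⟩
    obtain ⟨s, hs, rfl⟩ :=
      List.exists_eq_scanl_of_isChain (fun _ _ h => wStep_iff.mp h) hchain hhead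
    exact ⟨s, hs, Option.some_inj.mp ((hlast s).symm.trans hend), rfl⟩
  · rintro ⟨s, hs, hsum, rfl⟩
    exact ⟨List.scanl_ne_nil, List.head?_scanl, hsum ▸ hlast s,
      List.isChain_scanl (fun b x hx => wStep_iff.mpr ⟨x, hs x hx, rfl⟩) _⟩

lemma sortedLT_scanl_of_mem_warpSteps {s : List (ℕ × ℕ)} (hs : ∀ x ∈ s, x ∈ warpSteps)
    (b : ℕ × ℕ) : (s.scanl (· + ·) b).SortedLT :=
  List.sortedLT_scanl_add (fun x hx => pos_of_mem_warpSteps (hs x hx)) b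

lemma injOn_toFinset_scanl :
    Set.InjOn (fun s : List (ℕ × ℕ) => (s.scanl (· + ·) (1, 1)).toFinset)
      {s | ∀ x ∈ s, x ∈ warpSteps} := by
  intro s hs t ht hst
  refine List.scanl_injective (fun b => add_right_injective b) (1, 1) ?_
  refine (sortedLT_scanl_of_mem_warpSteps hs _).eq_of_mem_iff
    (sortedLT_scanl_of_mem_warpSteps ht _) fun a => ?_
  simpa using Finset.ext_iff.mp hst a

lemma setOf_isWarpingPath_card_eq (T U : ℕ) {L : ℕ} (hL : 1 ≤ L) :
    {p | IsWarpingPath T U p ∧ p.card = L} =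
      (fun s : List (ℕ × ℕ) => (s.scanl (· + ·) (1, 1)).toFinset) ''
        ↑{s ∈ stepLists (L - 1) | (1, 1) + s.sum = (T, U)} := by
  ext p
  simp only [IsWarpingPath, isWarpingList_iff, Set.mem_image, coe_filter, mem_stepLists]
  constructor
  · rintro ⟨⟨_, ⟨s, hs, hsum, rfl⟩, rfl⟩, rfl⟩
    refine ⟨s, ⟨⟨?_, hs⟩, hsum⟩, rfl⟩
    rw [List.toFinset_card_of_nodup (sortedLT_scanl_of_mem_warpSteps hs _).nodup]
    simp
  · rintro ⟨s, ⟨⟨hlen, hs⟩, hsum⟩, rfl⟩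
    refine ⟨⟨_, ⟨s, hs, hsum, rfl⟩, rfl⟩, ?_⟩
    rw [List.toFinset_card_of_nodup (sortedLT_scanl_of_mem_warpSteps hs _).nodup]
    simp only [List.length_scanl]
    omega

theorem warping_path_count_general (T U : ℕ) (hT : 1 ≤ T)
    (L : ℕ) (h1 : max T U ≤ L) :
    {p : Finset (ℕ × ℕ) | IsWarpingPath T U p ∧ p.card = L}.ncard
      = Nat.choose (L - 1) (L - T) * Nat.choose (T - 1) (L - U) := by
  have hcount : {s ∈ stepLists (L - 1) | (1, 1) + s.sum = (T, U)} =
      {s ∈ stepLists (L - 1) | s.count (1, 0) = L - U ∧ s.count (0, 1) = L - T} := by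
    refine filter_congr fun s hs => ?_
    obtain ⟨hlen, hsteps⟩ := mem_stepLists.mp hs
    have := sum_add_count_eq hsteps
    simp only [hlen, Prod.ext_iff, Prod.fst_add, Prod.snd_add] at this ⊢
    omega
  rw [setOf_isWarpingPath_card_eq T U (by omega),
    (injOn_toFinset_scanl.mono fun s hs => (mem_stepLists.mp (mem_filter.mp hs).1).2).ncard_image,
    Set.ncard_coe_finset, hcount, card_filter_stepLists_count, Nat.choose_mul le_add_self]
  congr 2 <;> omega

/-- for `max T U ≤ L ≤ T + U - 1`, the number of warping paths of
order `T × U` of length exactly `L` is `(L-1).choose (L-T) * (T-1).choose (L-U)`. -/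
theorem warping_path_count (T U : ℕ) (hT : 1 ≤ T) (hU : 1 ≤ U)
    (L : ℕ) (h1 : max T U ≤ L) (h2 : L ≤ T + U - 1) :
    {p : Finset (ℕ × ℕ) | IsWarpingPath T U p ∧ p.card = L}.ncard
      = Nat.choose (L - 1) (L - T) * Nat.choose (T - 1) (L - U) :=
  warping_path_count_general T U hT L h1
end

section
/- Let G = (V, E_1, …, E_T) and H = (W, F_1, …, F_U) be temporal graphs with |V| ≤ |W|, with vertex signature functions f_{G_i} : V → Q^k (i ∈ [T]) and f_{H_j} : W → Q^k (j ∈ [U]), a metric d on Q^k, and deletion costs Δ_{H_j}(w) ∈ Q. Let p ∈ P_{T,U} be a fixed warping path, let Q be a set of |W| − |V| dummy vertices disjoint from V, and set V' = V ∪ Q. Define σ(u, v) = Σ_{(i,j)∈p} d(f_{G_i}(u), f_{H_j}(v)) for u ∈ V, v ∈ W, and σ(u, v) = Σ_{(i,j)∈p} Δ_{H_j}(v) for u ∈ Q, v ∈ W. Then min_{M ∈ M(V,W)} Σ_{(i,j)∈p} C(G_i, H_j, M) = min over bijections π : V' → W of Σ_{u∈V'} σ(u, π(u)). -/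
/-- `M` is a vertex mapping between the finite vertex sets `V` and `W`:
it consists of `min |V| |W|` pairs, and every vertex of `V` (resp. `W`)
occurs in at most one pair of `M`. -/
def IsVertexMapping {V W : Type*} [Fintype V] [Fintype W]
    (M : Finset (V × W)) : Prop :=
  M.card = min (Fintype.card V) (Fintype.card W) ∧
  (∀ a ∈ M, ∀ b ∈ M, a.1 = b.1 → a = b) ∧
  (∀ a ∈ M, ∀ b ∈ M, a.2 = b.2 → a = b)

/-!
For `|V| ≤ |W|` a vertex mapping is exactly the graph of an injection `m : V → W`. Matching the
`|W| - |V|` dummy vertices bijectively with the vertices of `W` outside the range of `m` extends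
`m` to a bijection `π : V ⊕ Q ≃ W`, and every such bijection restricts to an injection on `V`.
Under this correspondence the deleted vertices of `W` are exactly the images of the dummy vertices,
so both costs are the same finite sum, with the sum over the warping path exchanged with the sums
over vertices; the two minima are then minima of the same finite nonempty set.
-/

section

open Finset

variable {V W α : Type*} [Fintype V]

def graphFinset (m : V → W) : Finset (V × W) :=
  univ.map ⟨fun v => (v, m v), fun _ _ h => congrArg Prod.fst h⟩

@[simp]
lemma mem_graphFinset {m : V → W} {a : V × W} : a ∈ graphFinset m ↔ m a.1 = a.2 := by
  simp only [graphFinset, mem_map, mem_univ, true_and]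
  exact ⟨by rintro ⟨v, rfl⟩; rfl, fun h => ⟨a.1, Prod.ext rfl h⟩⟩

@[simp]
lemma image_snd_graphFinset [DecidableEq W] (m : V → W) :
    (graphFinset m).image Prod.snd = univ.image m := by
  ext w
  simp

lemma sum_graphFinset {β : Type*} [AddCommMonoid β] (m : V → W) (F : V × W → β) :
    ∑ a ∈ graphFinset m, F a = ∑ v, F (v, m v) :=
  sum_map _ _ _

variable [Fintype W]

lemma isVertexMapping_graphFinset {m : V → W} (hm : Function.Injective m) :
    IsVertexMapping (graphFinset m) := by
  refine ⟨?_, fun a ha b hb h => ?_, fun a ha b hb h => ?_⟩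
  · simp [graphFinset, Fintype.card_le_of_injective m hm]
  · rw [mem_graphFinset] at ha hb
    exact Prod.ext h (by rw [← ha, ← hb, h])
  · rw [mem_graphFinset] at ha hb
    exact Prod.ext (hm (by rw [ha, hb, h])) h

lemma IsVertexMapping.exists_eq_graphFinset {M : Finset (V × W)} (hM : IsVertexMapping M)
    (hVW : Fintype.card V ≤ Fintype.card W) :
    ∃ m : V → W, Function.Injective m ∧ graphFinset m = M := by
  classical
  obtain ⟨hcard, hfst, hsnd⟩ := hM
  rw [min_eq_left hVW] at hcard
  have himage : M.image Prod.fst = univ :=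
    eq_univ_of_card _ (by rw [card_image_of_injOn hfst, hcard])
  have hex (v : V) : ∃ w, (v, w) ∈ M := by
    obtain ⟨a, ha, rfl⟩ := mem_image.1 (himage ▸ mem_univ v)
    exact ⟨a.2, ha⟩
  choose m hm using hex
  refine ⟨m, fun x y h => congrArg Prod.fst (hsnd _ (hm x) _ (hm y) h), ?_⟩
  refine eq_of_subset_of_card_le (fun a ha => ?_) (by simp [graphFinset, hcard])
  obtain ⟨v, w⟩ := a
  simp only [mem_graphFinset] at ha
  exact ha ▸ hm v

variable [Fintype α]

lemma exists_sumEquiv_comp_inl_eq {m : V → W} (hm : Function.Injective m)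
    (hcard : Fintype.card V + Fintype.card α = Fintype.card W) :
    ∃ π : V ⊕ α ≃ W, π ∘ Sum.inl = m := by
  classical
  have hcompl : Fintype.card α = Fintype.card ↥(Set.range m)ᶜ := by
    rw [Fintype.card_compl_set, Set.card_range_of_injective hm]
    omega
  refine ⟨(Equiv.sumCongr (Equiv.ofInjective m hm) (Fintype.equivOfCardEq hcompl)).trans
    (Equiv.Set.sumCompl _), funext fun v => ?_⟩
  simp [Equiv.Set.sumCompl_apply_inl]

lemma isVertexMapping_iff_exists_sumEquiv
    (hcard : Fintype.card V + Fintype.card α = Fintype.card W)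
    {M : Finset (V × W)} :
    IsVertexMapping M ↔ ∃ π : V ⊕ α ≃ W, graphFinset (π ∘ Sum.inl) = M := by
  constructor
  · intro hM
    obtain ⟨m, hm, rfl⟩ := hM.exists_eq_graphFinset (by omega)
    obtain ⟨π, hπ⟩ := exists_sumEquiv_comp_inl_eq (α := α) hm hcard
    exact ⟨π, by rw [hπ]⟩
  · rintro ⟨π, rfl⟩
    exact isVertexMapping_graphFinset (π.injective.comp Sum.inl_injective)

variable [DecidableEq W]

lemma sdiff_image_inl (π : V ⊕ α ≃ W) :
    univ \ univ.image (π ∘ Sum.inl) = univ.image (π ∘ Sum.inr) := by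
  ext w
  obtain ⟨x | x, rfl⟩ := π.surjective w <;> simp

lemma sum_sdiff_image_snd_graphFinset {β : Type*} [AddCommMonoid β]
    (π : V ⊕ α ≃ W) (F : W → β) :
    ∑ w ∈ univ \ (graphFinset (π ∘ Sum.inl)).image Prod.snd, F w =
      ∑ i, F (π (Sum.inr i)) := by
  rw [image_snd_graphFinset, sdiff_image_inl π]
  exact sum_image fun _ _ _ _ h => Sum.inr_injective (π.injective h)

lemma sum_cost_graphFinset_inl {ι β : Type*} [AddCommMonoid β] (p : Finset ι)
    (c : ι → V → W → β) (δ : ι → W → β) (π : V ⊕ α ≃ W) :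
    ∑ q ∈ p, ((∑ a ∈ graphFinset (π ∘ Sum.inl), c q a.1 a.2) +
        ∑ w ∈ univ \ (graphFinset (π ∘ Sum.inl)).image Prod.snd, δ q w) =
      (∑ u, ∑ q ∈ p, c q u (π (Sum.inl u))) + ∑ i, ∑ q ∈ p, δ q (π (Sum.inr i)) := by
  simp only [sum_graphFinset, sum_sdiff_image_snd_graphFinset, sum_add_distrib, Function.comp]
  rw [sum_comm (s := p), sum_comm (s := p)]

end

theorem fixed_warping_path_assignment_general
    {k : ℕ} {V W : Type*} [Fintype V] [Fintype W] [DecidableEq W]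
    (hVW : Fintype.card V ≤ Fintype.card W)
    (f : ℕ → V → (Fin k → ℚ)) (g : ℕ → W → (Fin k → ℚ))
    (d : (Fin k → ℚ) → (Fin k → ℚ) → ℚ)
    (Δ : ℕ → W → ℚ)
    (p : Finset (ℕ × ℕ)) :
    ∃ x : ℚ,
      IsLeast {x : ℚ | ∃ M : Finset (V × W), IsVertexMapping M ∧
        x = ∑ q ∈ p, ((∑ a ∈ M, d (f q.1 a.1) (g q.2 a.2)) +
          ∑ w ∈ Finset.univ \ M.image Prod.snd, Δ q.2 w)} x ∧
      IsLeast {x : ℚ | ∃ π : (V ⊕ Fin (Fintype.card W - Fintype.card V)) ≃ W,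
        x = (∑ u : V, ∑ q ∈ p, d (f q.1 u) (g q.2 (π (Sum.inl u)))) +
            ∑ i : Fin (Fintype.card W - Fintype.card V),
              ∑ q ∈ p, Δ q.2 (π (Sum.inr i))} x := by
  have hcard : Fintype.card V + Fintype.card (Fin (Fintype.card W - Fintype.card V)) =
      Fintype.card W := by
    rw [Fintype.card_fin]; omega
  have hcost (π : V ⊕ Fin (Fintype.card W - Fintype.card V) ≃ W) :=
    sum_cost_graphFinset_inl p (fun q v w => d (f q.1 v) (g q.2 w)) (fun q w => Δ q.2 w) π
  have : Nonempty (V ⊕ Fin (Fintype.card W - Fintype.card V) ≃ W) :=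
    ⟨Fintype.equivOfCardEq (by rw [Fintype.card_sum, hcard])⟩
  obtain ⟨π₀, hπ₀⟩ :=
    Finite.exists_min fun π : V ⊕ Fin (Fintype.card W - Fintype.card V) ≃ W =>
      (∑ u : V, ∑ q ∈ p, d (f q.1 u) (g q.2 (π (Sum.inl u)))) +
        ∑ i, ∑ q ∈ p, Δ q.2 (π (Sum.inr i))
  have hmapping (M : Finset (V × W)) := isVertexMapping_iff_exists_sumEquiv (M := M) hcard
  refine ⟨_, ⟨⟨_, (hmapping _).2 ⟨π₀, rfl⟩, (hcost π₀).symm⟩, ?_⟩,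
    ⟨π₀, rfl⟩, ?_⟩
  · rintro _ ⟨M, hM, rfl⟩
    obtain ⟨π, rfl⟩ := (hmapping M).1 hM
    exact (hcost π).symm ▸ hπ₀ π
  · rintro _ ⟨π, rfl⟩
    exact hπ₀ π

/-- for a fixed warping path `p`, the minimum over vertex mappings `M`
of `∑_{(i,j) ∈ p} C(G_i, H_j, M)` equals the minimum, over bijections `π` from
`V' = V ⊕ Q` (with `Q` a set of `|W| - |V|` dummy vertices) to `W`, of
`∑_{u ∈ V'} σ(u, π u)`, where `σ(u, v) = ∑_{(i,j) ∈ p} d (f_{G_i} u) (f_{H_j} v)`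
for `u ∈ V` and `σ(u, v) = ∑_{(i,j) ∈ p} Δ_{H_j} v` for `u ∈ Q`.
(Both minima exist; the statement asserts they coincide.) -/
theorem fixed_warping_path_assignment
    {k : ℕ} {V W : Type*} [Fintype V] [Fintype W] [DecidableEq V] [DecidableEq W]
    (hVW : Fintype.card V ≤ Fintype.card W)
    (T U : ℕ) (hT : 1 ≤ T) (hU : 1 ≤ U)
    (EG : ℕ → Finset (Sym2 V)) (FH : ℕ → Finset (Sym2 W))
    (f : ℕ → V → (Fin k → ℚ)) (g : ℕ → W → (Fin k → ℚ))
    (d : (Fin k → ℚ) → (Fin k → ℚ) → ℚ)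
    (hd0 : ∀ a b, d a b = 0 ↔ a = b)
    (hdsymm : ∀ a b, d a b = d b a)
    (hdtri : ∀ a b c, d a c ≤ d a b + d b c)
    (Δ : ℕ → W → ℚ)
    (p : Finset (ℕ × ℕ)) (hp : IsWarpingPath T U p) :
    ∃ x : ℚ,
      IsLeast {x : ℚ | ∃ M : Finset (V × W), IsVertexMapping M ∧
        x = ∑ q ∈ p, ((∑ a ∈ M, d (f q.1 a.1) (g q.2 a.2)) +
          ∑ w ∈ Finset.univ \ M.image Prod.snd, Δ q.2 w)} x ∧
      IsLeast {x : ℚ | ∃ π : (V ⊕ Fin (Fintype.card W - Fintype.card V)) ≃ W,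
        x = (∑ u : V, ∑ q ∈ p, d (f q.1 u) (g q.2 (π (Sum.inl u)))) +
            ∑ i : Fin (Fintype.card W - Fintype.card V),
              ∑ q ∈ p, Δ q.2 (π (Sum.inr i))} x :=
  fixed_warping_path_assignment_general hVW f g d Δ p
end

section
/- Let (X, d) be a metric space and let x = (x_1, …, x_T) ∈ X^T and y = (y_1, …, y_U) ∈ X^U be finite sequences (T, U ≥ 1). Then min_{p ∈ P_{T,U}} Σ_{(i,j)∈p} d(x_i, y_j) = 0 if and only if the condensation of x equals the condensation of y. -/
/-!
Write `c` for condensation. Everything rests on how it reacts to appending one entry: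
`c(L ++ [a])` is `c(L)` when `L` already ends in `a`, and `c(L) ++ [a]` otherwise, and `c(L)`
ends in the same entry as `L`. A warping path of cost zero matches `x i = y j` at each of its
cells, so growing it by a diagonal step appends one common entry to both prefixes, while a
horizontal or vertical step only repeats the last entry of one of them. Conversely, if the
condensations agree then so do the last entries, and the path is built backwards: peel off a
repeated last entry of `x` (horizontal step) or of `y` (vertical step), or else the last
entries of both (diagonal step).
-/

namespace List

variable {α : Type*} [DecidableEq α]

theorem getLast?_destutter'_ne (l : List α) (a : α) :
    (l.destutter' (· ≠ ·) a).getLast? = (a :: l).getLast? := by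
  induction l generalizing a with
  | nil => rfl
  | cons b l ih =>
    by_cases hab : a = b
    · subst hab
      rw [destutter'_cons_neg _ (not_not.2 rfl), ih, getLast?_cons_cons]
    · rw [destutter'_cons_pos _ hab, getLast?_cons_cons, ← ih]
      exact getLast?_cons_of_ne_nil (destutter'_ne_nil _ _)

theorem getLast?_destutter_ne (l : List α) : (l.destutter (· ≠ ·)).getLast? = l.getLast? := by
  cases l with
  | nil => rfl
  | cons a l => rw [destutter_cons', getLast?_destutter'_ne]

theorem destutter'_ne_append_singleton (l : List α) (a b : α) :
    (l ++ [b]).destutter' (· ≠ ·) a =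
      if (a :: l).getLast? = some b then l.destutter' (· ≠ ·) a
      else l.destutter' (· ≠ ·) a ++ [b] := by
  induction l generalizing a with
  | nil => by_cases hab : a = b <;> simp [hab]
  | cons c l ih =>
    by_cases hac : a = c
    · subst hac
      rw [cons_append, destutter'_cons_neg (R := (· ≠ ·)) _ (not_not.2 rfl),
        destutter'_cons_neg (R := (· ≠ ·)) _ (not_not.2 rfl), ih, getLast?_cons_cons]
    · rw [cons_append, destutter'_cons_pos (R := (· ≠ ·)) _ hac,
        destutter'_cons_pos (R := (· ≠ ·)) _ hac, ih, getLast?_cons_cons]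
      split_ifs <;> rfl

theorem destutter_ne_append_singleton (l : List α) (b : α) :
    (l ++ [b]).destutter (· ≠ ·) =
      if l.getLast? = some b then l.destutter (· ≠ ·) else l.destutter (· ≠ ·) ++ [b] := by
  cases l with
  | nil => simp
  | cons a l => simp only [cons_append, destutter_cons', destutter'_ne_append_singleton]

theorem destutter_ne_append_singleton_congr {l m : List α} (b : α)
    (h : l.destutter (· ≠ ·) = m.destutter (· ≠ ·)) :
    (l ++ [b]).destutter (· ≠ ·) = (m ++ [b]).destutter (· ≠ ·) := by
  have hlast : l.getLast? = m.getLast? := by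
    rw [← getLast?_destutter_ne l, h, getLast?_destutter_ne]
  rw [destutter_ne_append_singleton, destutter_ne_append_singleton, h, hlast]

end List

theorem isWarpingList_singleton : IsWarpingList 1 1 [(1, 1)] :=
  ⟨List.cons_ne_nil _ _, rfl, rfl, List.isChain_singleton _⟩

theorem IsWarpingList.append_singleton {T U : ℕ} {l : List (ℕ × ℕ)}
    (hl : IsWarpingList T U l) {b : ℕ × ℕ} (hb : WStep (T, U) b) :
    IsWarpingList b.1 b.2 (l ++ [b]) := by
  obtain ⟨hne, hhead, hlast, hchain⟩ := hl
  refine ⟨List.append_ne_nil_of_left_ne_nil hne _, ?_, by simp, ?_⟩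
  · rw [List.head?_append_of_ne_nil _ hne, hhead]
  · exact hchain.append (List.isChain_singleton _) (by simpa [hlast] using hb)

theorem IsWarpingList.mem {T U : ℕ} {l : List (ℕ × ℕ)} (hl : IsWarpingList T U l) :
    (T, U) ∈ l :=
  List.mem_of_getLast? hl.2.2.1

theorem IsWarpingList.induction {P : ℕ → ℕ → List (ℕ × ℕ) → Prop}
    (singleton : P 1 1 [(1, 1)])
    (append_singleton : ∀ T U l b, IsWarpingList T U l → P T U l → WStep (T, U) b →
      P b.1 b.2 (l ++ [b]))
    {T U : ℕ} {l : List (ℕ × ℕ)} (hl : IsWarpingList T U l) : P T U l := by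
  induction l using List.reverseRecOn generalizing T U with
  | nil => exact absurd rfl hl.1
  | append_singleton l b ih =>
    obtain ⟨-, hhead, hlast, hchain⟩ := hl
    obtain rfl : b = (T, U) := by simpa using hlast
    rcases l.eq_nil_or_concat with rfl | ⟨l', c, rfl⟩
    · obtain ⟨rfl, rfl⟩ : T = 1 ∧ U = 1 := by simpa using hhead
      exact singleton
    · rw [List.concat_eq_append] at hhead hchain ih ⊢
      have hl : IsWarpingList c.1 c.2 (l' ++ [c]) :=
        ⟨by simp, by simpa using hhead, by simp, hchain.left_of_append⟩
      have hstep : WStep c (T, U) := by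
        simpa using (List.isChain_append.1 hchain).2.2
      exact append_singleton c.1 c.2 _ _ hl (ih hl) hstep

theorem WStep.le {a b : ℕ × ℕ} (h : WStep a b) : a ≤ b := by
  obtain ⟨a1, a2⟩ := a
  rcases h with rfl | rfl | rfl <;> simp [Prod.mk_le_mk]

theorem IsWarpingList.one_le {T U : ℕ} {l : List (ℕ × ℕ)} (hl : IsWarpingList T U l) :
    (1, 1) ≤ (T, U) :=
  hl.induction (P := fun T U _ => (1, 1) ≤ (T, U)) le_rfl
    fun _ _ _ _ _ ih hb => ih.trans hb.le

def initialSegment {X : Type*} (x : ℕ → X) (n : ℕ) : List X :=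
  (List.range n).map (fun i => x (i + 1))

section initialSegment

variable {X : Type*} (x : ℕ → X)

@[simp]
theorem initialSegment_zero : initialSegment x 0 = [] := rfl

theorem initialSegment_succ (n : ℕ) :
    initialSegment x (n + 1) = initialSegment x n ++ [x (n + 1)] := by
  simp [initialSegment, List.range_succ]

theorem getLast?_initialSegment_succ (n : ℕ) :
    (initialSegment x (n + 1)).getLast? = some (x (n + 1)) := by
  simp [initialSegment_succ]

end initialSegment

section destutter

variable {X : Type*} [DecidableEq X] {x y : ℕ → X}

theorem destutter_initialSegment_of_eq {n : ℕ} (h : x (n + 1) = x (n + 2)) :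
    (initialSegment x (n + 2)).destutter (· ≠ ·) =
      (initialSegment x (n + 1)).destutter (· ≠ ·) := by
  rw [initialSegment_succ x (n + 1), List.destutter_ne_append_singleton,
    if_pos (by rw [getLast?_initialSegment_succ, h])]

theorem IsWarpingList.destutter_initialSegment_eq {T U : ℕ} {l : List (ℕ × ℕ)}
    (hl : IsWarpingList T U l) (h : ∀ q ∈ l, x q.1 = y q.2) :
    (initialSegment x T).destutter (· ≠ ·) = (initialSegment y U).destutter (· ≠ ·) := by
  revert h
  refine hl.induction (P := fun T U l => (∀ q ∈ l, x q.1 = y q.2) →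
    (initialSegment x T).destutter (· ≠ ·) = (initialSegment y U).destutter (· ≠ ·)) ?_ ?_
  · intro h
    simp [initialSegment, h (1, 1) (List.mem_singleton_self _)]
  · rintro T U l b hl ih hb h
    have hTU : x T = y U := h (T, U) (List.mem_append_left _ hl.mem)
    have hb' : x b.1 = y b.2 := h b (by simp)
    specialize ih fun q hq => h q (List.mem_append_left _ hq)
    obtain ⟨hT, hU⟩ := Prod.mk_le_mk.1 hl.one_le
    obtain ⟨T, rfl⟩ := Nat.exists_eq_add_of_le' hT
    obtain ⟨U, rfl⟩ := Nat.exists_eq_add_of_le' hU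
    rcases hb with rfl | rfl | rfl
    · rw [initialSegment_succ x (T + 1), initialSegment_succ y (U + 1), hb']
      exact List.destutter_ne_append_singleton_congr _ ih
    · rwa [destutter_initialSegment_of_eq (hTU.symm.trans hb')]
    · rwa [destutter_initialSegment_of_eq (hTU.trans hb'.symm)]

end destutter

section construction

variable {X : Type*} [DecidableEq X] (x y : ℕ → X)

theorem exists_isWarpingList_of_destutter_eq (m n : ℕ)
    (h : (initialSegment x (m + 1)).destutter (· ≠ ·) =
      (initialSegment y (n + 1)).destutter (· ≠ ·)) :
    ∃ l, IsWarpingList (m + 1) (n + 1) l ∧ ∀ q ∈ l, x q.1 = y q.2 := by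
  have hlast : x (m + 1) = y (n + 1) := by
    simpa [List.getLast?_destutter_ne, getLast?_initialSegment_succ]
      using congrArg List.getLast? h
  have extend : ∀ T U l, IsWarpingList T U l → (∀ q ∈ l, x q.1 = y q.2) →
      WStep (T, U) (m + 1, n + 1) →
      ∃ l, IsWarpingList (m + 1) (n + 1) l ∧ ∀ q ∈ l, x q.1 = y q.2 :=
    fun T U l hl hq hb => ⟨l ++ [(m + 1, n + 1)], hl.append_singleton hb, fun q hq' => by
      rcases List.mem_append.1 hq' with hq' | hq'
      exacts [hq q hq', (List.mem_singleton.1 hq') ▸ hlast]⟩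
  by_cases hx : (initialSegment x m).getLast? = some (x (m + 1))
  · obtain ⟨m, rfl⟩ : ∃ m', m = m' + 1 :=
      Nat.exists_eq_succ_of_ne_zero (by rintro rfl; simp at hx)
    rw [getLast?_initialSegment_succ, Option.some_inj] at hx
    obtain ⟨l, hl, hq⟩ := exists_isWarpingList_of_destutter_eq m n
      (by rw [← destutter_initialSegment_of_eq hx, h])
    exact extend _ _ l hl hq (Or.inr (Or.inr rfl))
  by_cases hy : (initialSegment y n).getLast? = some (y (n + 1))
  · obtain ⟨n, rfl⟩ : ∃ n', n = n' + 1 :=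
      Nat.exists_eq_succ_of_ne_zero (by rintro rfl; simp at hy)
    rw [getLast?_initialSegment_succ, Option.some_inj] at hy
    obtain ⟨l, hl, hq⟩ := exists_isWarpingList_of_destutter_eq m n
      (by rw [← destutter_initialSegment_of_eq hy, h])
    exact extend _ _ l hl hq (Or.inr (Or.inl rfl))
  have hxy :
      (initialSegment x m).destutter (· ≠ ·) = (initialSegment y n).destutter (· ≠ ·) := by
    rw [initialSegment_succ, initialSegment_succ, List.destutter_ne_append_singleton,
      List.destutter_ne_append_singleton, if_neg hx, if_neg hy, hlast] at h
    exact List.append_cancel_right h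
  match m, n, hxy with
  | 0, 0, _ => exact ⟨[(1, 1)], isWarpingList_singleton, by simpa using hlast⟩
  | 0, n + 1, hxy => simp [initialSegment_succ] at hxy
  | m + 1, 0, hxy => simp [initialSegment_succ] at hxy
  | m + 1, n + 1, hxy =>
    obtain ⟨l, hl, hq⟩ := exists_isWarpingList_of_destutter_eq m n hxy
    exact extend _ _ l hl hq (Or.inl rfl)
termination_by m + n

end construction

theorem isLeast_warpingCost_zero_iff {X : Type*} [MetricSpace X] (T U : ℕ) (x y : ℕ → X) :
    IsLeast {s : ℝ | ∃ p : Finset (ℕ × ℕ), IsWarpingPath T U p ∧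
        s = ∑ q ∈ p, dist (x q.1) (y q.2)} 0 ↔
      ∃ l, IsWarpingList T U l ∧ ∀ q ∈ l, x q.1 = y q.2 := by
  have hsum (l : List (ℕ × ℕ)) :
      ∑ q ∈ l.toFinset, dist (x q.1) (y q.2) = 0 ↔ ∀ q ∈ l, x q.1 = y q.2 := by
    simp [Finset.sum_eq_zero_iff_of_nonneg, dist_nonneg]
  have hlower : 0 ∈ lowerBounds {s : ℝ | ∃ p : Finset (ℕ × ℕ), IsWarpingPath T U p ∧
      s = ∑ q ∈ p, dist (x q.1) (y q.2)} := by
    rintro _ ⟨p, -, rfl⟩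
    exact Finset.sum_nonneg fun _ _ => dist_nonneg
  rw [IsLeast, and_iff_left hlower]
  constructor
  · rintro ⟨_, ⟨l, hl, rfl⟩, h0⟩
    exact ⟨l, hl, (hsum l).1 h0.symm⟩
  · rintro ⟨l, hl, h⟩
    exact ⟨_, ⟨l, hl, rfl⟩, ((hsum l).2 h).symm⟩

/-- for sequences `x₁, …, x_T` and `y₁, …, y_U` in a metric space, the
dynamic time warping distance `min_{p ∈ P_{T,U}} ∑_{(i,j) ∈ p} dist x_i y_j` is `0`
(expressed as: `0` is the least element of the set of warping costs) if and only if
the condensations of the two sequences coincide.  Condensation is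
`List.destutter (· ≠ ·)`, which collapses each maximal run of equal consecutive
entries to a single entry. -/
theorem dtw_zero_iff_condensations_eq {X : Type*} [MetricSpace X] [DecidableEq X]
    (T U : ℕ) (hT : 1 ≤ T) (hU : 1 ≤ U) (x y : ℕ → X) :
    IsLeast {s : ℝ | ∃ p : Finset (ℕ × ℕ), IsWarpingPath T U p ∧
        s = ∑ q ∈ p, dist (x q.1) (y q.2)} 0 ↔
      ((List.range T).map (fun i => x (i + 1))).destutter (· ≠ ·) =
      ((List.range U).map (fun j => y (j + 1))).destutter (· ≠ ·) := by
  obtain ⟨m, rfl⟩ := Nat.exists_eq_add_of_le' hT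
  obtain ⟨n, rfl⟩ := Nat.exists_eq_add_of_le' hU
  rw [isLeast_warpingCost_zero_iff]
  exact ⟨fun ⟨_, hl, h⟩ => hl.destutter_initialSegment_eq h,
    exists_isWarpingList_of_destutter_eq x y m n⟩
end

section
/- Let G = (V, E_1, …, E_T) and H = (W, F_1, …, F_U) be temporal graphs with |V| = |W| = n, with vertex signature functions f_{G_i} : V → Q^k (i ∈ [T]) and f_{H_j} : W → Q^k (j ∈ [U]) and a metric d on Q^k. Then dtgw(G, H) = 0 if and only if there exists a bijection M : V → W such that the condensation of the sequence ((f_{G_i}(v))_{v∈V})_{i=1,…,T} equals the condensation of the sequence ((f_{H_j}(M(v)))_{v∈V})_{j=1,…,U}. -/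
/-!
Since `d` is a metric, a pair `(M, p)` has cost zero exactly when every cell `(i, j)` of the
warping path `p` carries equal signatures `f i = g j ∘ M`. Such a path exists iff the two
signature sequences have the same condensation: a horizontal or vertical step repeats a value
on one side, which condensation forgets, and a diagonal step advances both sides; conversely,
from equal condensations a path is built greedily, stepping on whichever side repeats its
current value and diagonally otherwise.
-/

namespace List

variable {α : Type*}

theorem head?_destutter' (R : α → α → Prop) [DecidableRel R] (a : α) (l : List α) :
    (l.destutter' R a).head? = some a := by
  induction l generalizing a with
  | nil => rfl
  | cons b l ih =>
    rw [destutter'_cons]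
    split
    · rfl
    · exact ih a

theorem head?_destutter (R : α → α → Prop) [DecidableRel R] (l : List α) :
    (l.destutter R).head? = l.head? := by
  cases l with
  | nil => rfl
  | cons a l => exact head?_destutter' R a l

theorem destutter_ne_cons [DecidableEq α] (a : α) (l : List α) :
    (a :: l).destutter (· ≠ ·) =
      if l.head? = some a then l.destutter (· ≠ ·) else a :: l.destutter (· ≠ ·) := by
  cases l with
  | nil => rfl
  | cons b l =>
    rw [destutter_cons_cons, destutter_cons']
    by_cases hab : a = b
    · subst hab; simp
    · simp [hab, Ne.symm hab]

end List

/-- The list `[A i, A (i + 1), …, A T]`, empty when `T < i`. -/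
def listIcc {α : Type*} (A : ℕ → α) (i T : ℕ) : List α :=
  (List.range' i (T + 1 - i)).map A

section ListIcc

variable {α : Type*} (A : ℕ → α)

theorem map_range_succ_eq_listIcc (T : ℕ) :
    (List.range T).map (fun i => A (i + 1)) = listIcc A 1 T := by
  rw [listIcc, Nat.add_sub_cancel, List.range'_eq_map_range, List.map_map]
  exact List.map_congr_left fun i _ => by simp [Nat.add_comm]

theorem listIcc_self (T : ℕ) : listIcc A T T = [A T] := by
  simp [listIcc]

theorem listIcc_of_lt {i T : ℕ} (h : i < T) : listIcc A i T = A i :: listIcc A (i + 1) T := by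
  rw [listIcc, listIcc, show T + 1 - i = (T + 1 - (i + 1)) + 1 by omega]
  rfl

theorem head?_listIcc {i T : ℕ} (h : i ≤ T) : (listIcc A i T).head? = some (A i) := by
  rcases h.lt_or_eq with h | rfl
  · rw [listIcc_of_lt A h]; rfl
  · rw [listIcc_self]; rfl

variable [DecidableEq α]

theorem head?_destutter_listIcc {i T : ℕ} (h : i ≤ T) :
    ((listIcc A i T).destutter (· ≠ ·)).head? = some (A i) := by
  rw [List.head?_destutter, head?_listIcc A h]

theorem destutter_listIcc_of_lt {i T : ℕ} (h : i < T) :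
    (listIcc A i T).destutter (· ≠ ·) =
      if A (i + 1) = A i then (listIcc A (i + 1) T).destutter (· ≠ ·)
      else A i :: (listIcc A (i + 1) T).destutter (· ≠ ·) := by
  rw [listIcc_of_lt A h, List.destutter_ne_cons, head?_listIcc A h]
  simp only [Option.some_inj]

end ListIcc

/-- `WarpReach C e a`: some warping path leads from `a` to `e` through cells satisfying `C`. -/
inductive WarpReach (C : ℕ × ℕ → Prop) (e : ℕ × ℕ) : ℕ × ℕ → Prop
  | refl : C e → WarpReach C e e
  | step {a b : ℕ × ℕ} : C a → WStep a b → WarpReach C e b → WarpReach C e a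

namespace WarpReach

variable {C : ℕ × ℕ → Prop} {e a : ℕ × ℕ}

theorem le (h : WarpReach C e a) : a ≤ e := by
  induction h with
  | refl => exact le_rfl
  | step _ hab _ ih => exact hab.le.trans ih

theorem iff_exists_list : WarpReach C e a ↔ ∃ l : List (ℕ × ℕ), l.head? = some a ∧
    l.getLast? = some e ∧ l.IsChain WStep ∧ ∀ q ∈ l, C q := by
  constructor
  · intro h
    induction h with
    | refl hC => exact ⟨[e], rfl, rfl, List.isChain_singleton _, by simpa using hC⟩
    | @step a b hC hab _ ih =>
      obtain ⟨l, hhead, hlast, hchain, hl⟩ := ih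
      obtain ⟨l, rfl⟩ : ∃ l', l = b :: l' := ⟨l.tail, (List.cons_head?_tail hhead).symm⟩
      refine ⟨a :: b :: l, rfl, by simpa using hlast, List.IsChain.cons_cons hab hchain, ?_⟩
      simpa [hC] using hl
  · rintro ⟨l, hhead, hlast, hchain, hl⟩
    induction l generalizing a with
    | nil => simp at hhead
    | cons q l ih =>
      obtain rfl : q = a := by simpa using hhead
      cases l with
      | nil =>
        obtain rfl : q = e := by simpa using hlast
        exact refl (hl q (List.mem_singleton_self q))
      | cons b l =>
        rw [List.isChain_cons_cons] at hchain
        exact step (hl q List.mem_cons_self) hchain.1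
          (ih rfl (by simpa using hlast) hchain.2 fun r hr => hl r (List.mem_cons_of_mem q hr))

end WarpReach

theorem exists_isWarpingPath_iff_warpReach (C : ℕ × ℕ → Prop) (T U : ℕ) :
    (∃ p, IsWarpingPath T U p ∧ ∀ q ∈ p, C q) ↔ WarpReach C (T, U) (1, 1) := by
  rw [WarpReach.iff_exists_list]
  constructor
  · rintro ⟨_, ⟨l, ⟨-, hhead, hlast, hchain⟩, rfl⟩, hl⟩
    exact ⟨l, hhead, hlast, hchain, fun q hq => hl q (List.mem_toFinset.mpr hq)⟩
  · rintro ⟨l, hhead, hlast, hchain, hl⟩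
    refine ⟨l.toFinset, ⟨l, ⟨?_, hhead, hlast, hchain⟩, rfl⟩, fun q hq => hl q (List.mem_toFinset.mp hq)⟩
    rintro rfl
    simp at hhead

section Condensation

variable {α : Type*} [DecidableEq α] {A B : ℕ → α}

theorem WarpReach.destutter_listIcc_eq {T U : ℕ} {a : ℕ × ℕ}
    (h : WarpReach (fun q => A q.1 = B q.2) (T, U) a) :
    (listIcc A a.1 T).destutter (· ≠ ·) = (listIcc B a.2 U).destutter (· ≠ ·) := by
  induction h with
  | refl hC => simp only [listIcc_self, List.destutter_singleton, hC]
  | @step a b hC hab hb ih =>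
    have hbe := hb.le
    have hCb : A b.1 = B b.2 := by
      simpa [head?_destutter_listIcc, hbe.1, hbe.2] using congrArg List.head? ih
    rcases hab with rfl | rfl | rfl
    · rw [destutter_listIcc_of_lt A hbe.1, destutter_listIcc_of_lt B hbe.2, ih, hCb, hC]
    · rw [destutter_listIcc_of_lt B hbe.2, if_pos (hCb.symm.trans hC)]
      exact ih
    · rw [destutter_listIcc_of_lt A hbe.1, if_pos (hCb.trans hC.symm)]
      exact ih

theorem warpReach_of_destutter_listIcc_eq {T U i j : ℕ} (hi : i ≤ T) (hj : j ≤ U)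
    (h : (listIcc A i T).destutter (· ≠ ·) = (listIcc B j U).destutter (· ≠ ·)) :
    WarpReach (fun q => A q.1 = B q.2) (T, U) (i, j) := by
  have hC : A i = B j := by
    simpa [head?_destutter_listIcc, hi, hj] using congrArg List.head? h
  by_cases hA : i < T ∧ A (i + 1) = A i
  · rw [destutter_listIcc_of_lt A hA.1, if_pos hA.2] at h
    exact .step hC (Or.inr (Or.inr rfl)) (warpReach_of_destutter_listIcc_eq hA.1 hj h)
  by_cases hB : j < U ∧ B (j + 1) = B j
  · rw [destutter_listIcc_of_lt B hB.1, if_pos hB.2] at h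
    exact .step hC (Or.inr (Or.inl rfl)) (warpReach_of_destutter_listIcc_eq hi hB.1 h)
  rcases hi.lt_or_eq with hi | rfl <;> rcases hj.lt_or_eq with hj | rfl
  · rw [destutter_listIcc_of_lt A hi, if_neg fun h' => hA ⟨hi, h'⟩,
      destutter_listIcc_of_lt B hj, if_neg fun h' => hB ⟨hj, h'⟩] at h
    exact .step hC (Or.inl rfl)
      (warpReach_of_destutter_listIcc_eq hi hj (List.cons_eq_cons.mp h).2)
  · rw [destutter_listIcc_of_lt A hi, if_neg fun h' => hA ⟨hi, h'⟩, listIcc_self,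
      List.destutter_singleton] at h
    simpa [(List.cons_eq_cons.mp h).2] using head?_destutter_listIcc A hi
  · rw [destutter_listIcc_of_lt B hj, if_neg fun h' => hB ⟨hj, h'⟩, listIcc_self,
      List.destutter_singleton] at h
    simpa [← (List.cons_eq_cons.mp h).2] using head?_destutter_listIcc B hj
  · exact .refl hC
termination_by (T - i) + (U - j)

theorem warpReach_iff_destutter_listIcc_eq {T U i j : ℕ} (hi : i ≤ T) (hj : j ≤ U) :
    WarpReach (fun q => A q.1 = B q.2) (T, U) (i, j) ↔
      (listIcc A i T).destutter (· ≠ ·) = (listIcc B j U).destutter (· ≠ ·) :=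
  ⟨WarpReach.destutter_listIcc_eq, warpReach_of_destutter_listIcc_eq hi hj⟩

end Condensation

theorem nonneg_of_triangle {β R : Type*} [Field R] [LinearOrder R] [IsStrictOrderedRing R]
    {d : β → β → R} (hself : ∀ a, d a a = 0) (hsymm : ∀ a b, d a b = d b a)
    (htri : ∀ a b c, d a c ≤ d a b + d b c) (a b : β) : 0 ≤ d a b := by
  linarith [htri a b a, hself a, hsymm a b]

theorem dtgw_zero_iff_condensations_eq_general
    {k : ℕ} {V W : Type*} [Fintype V]
    (T U : ℕ) (hT : 1 ≤ T) (hU : 1 ≤ U)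
    (f : ℕ → V → (Fin k → ℚ)) (g : ℕ → W → (Fin k → ℚ))
    (d : (Fin k → ℚ) → (Fin k → ℚ) → ℚ)
    (hd0 : ∀ a b, d a b = 0 ↔ a = b)
    (hdsymm : ∀ a b, d a b = d b a)
    (hdtri : ∀ a b c, d a c ≤ d a b + d b c) :
    IsLeast {s : ℚ | ∃ (M : V ≃ W) (p : Finset (ℕ × ℕ)), IsWarpingPath T U p ∧
        s = ∑ q ∈ p, ∑ v : V, d (f q.1 v) (g q.2 (M v))} 0 ↔
      ∃ M : V ≃ W,
        ((List.range T).map (fun i => (fun v : V => f (i + 1) v))).destutter (· ≠ ·) =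
        ((List.range U).map (fun j => (fun v : V => g (j + 1) (M v)))).destutter (· ≠ ·) := by
  have hd : ∀ a b, 0 ≤ d a b := nonneg_of_triangle (fun a => (hd0 a a).2 rfl) hdsymm hdtri
  have hcost_eq_zero (M : V ≃ W) (p : Finset (ℕ × ℕ)) :
      0 = ∑ q ∈ p, ∑ v : V, d (f q.1 v) (g q.2 (M v)) ↔
        ∀ q ∈ p, (fun v => f q.1 v) = fun v => g q.2 (M v) := by
    rw [eq_comm, Finset.sum_eq_zero_iff_of_nonneg fun _ _ => Finset.sum_nonneg fun _ _ => hd _ _]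
    refine forall₂_congr fun q _ => ?_
    simp [Finset.sum_eq_zero_iff_of_nonneg, hd, hd0, funext_iff]
  refine (and_iff_left ?_).trans (exists_congr fun M => ?_)
  · rintro s ⟨M, p, -, rfl⟩
    exact Finset.sum_nonneg fun _ _ => Finset.sum_nonneg fun _ _ => hd _ _
  rw [map_range_succ_eq_listIcc (fun i v => f i v),
    map_range_succ_eq_listIcc (fun j v => g j (M v)),
    ← warpReach_iff_destutter_listIcc_eq hT hU, ← exists_isWarpingPath_iff_warpReach]
  exact exists_congr fun p => and_congr_right fun _ => hcost_eq_zero M p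

/-- for temporal graphs with `|V| = |W| = n` (so that every vertex
mapping is a bijection and no deletion costs occur), `dtgw(𝒢, ℋ) = 0` (expressed
as: `0` is the least element of the set of costs realized by pairs of a bijection
and a warping path) if and only if there is a bijection `M : V ≃ W` such that the
condensation of the sequence of layer signatures `(f_{G_i}(v))_{v ∈ V}`, `i = 1…T`,
equals the condensation of the sequence `(f_{H_j}(M v))_{v ∈ V}`, `j = 1…U`. -/
theorem dtgw_zero_iff_condensations_eq
    {k : ℕ} {V W : Type*} [Fintype V] [Fintype W] [DecidableEq V] [DecidableEq W]
    (n : ℕ) (hV : Fintype.card V = n) (hW : Fintype.card W = n)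
    (T U : ℕ) (hT : 1 ≤ T) (hU : 1 ≤ U)
    (EG : ℕ → Finset (Sym2 V)) (FH : ℕ → Finset (Sym2 W))
    (f : ℕ → V → (Fin k → ℚ)) (g : ℕ → W → (Fin k → ℚ))
    (d : (Fin k → ℚ) → (Fin k → ℚ) → ℚ)
    (hd0 : ∀ a b, d a b = 0 ↔ a = b)
    (hdsymm : ∀ a b, d a b = d b a)
    (hdtri : ∀ a b c, d a c ≤ d a b + d b c) :
    IsLeast {s : ℚ | ∃ (M : V ≃ W) (p : Finset (ℕ × ℕ)), IsWarpingPath T U p ∧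
        s = ∑ q ∈ p, ∑ v : V, d (f q.1 v) (g q.2 (M v))} 0 ↔
      ∃ M : V ≃ W,
        ((List.range T).map (fun i => (fun v : V => f (i + 1) v))).destutter (· ≠ ·) =
        ((List.range U).map (fun j => (fun v : V => g (j + 1) (M v)))).destutter (· ≠ ·) :=
  dtgw_zero_iff_condensations_eq_general T U hT hU f g d hd0 hdsymm hdtri
end

section
/- Let T, U ≥ 1 be integers, let p be a warping path of order T×U, and define w : [T]×[U] → {0,1} by w_{s,t} = 1 if and only if (s,t) ∈ p. Then w satisfies: w_{1,1} = 1; w_{s,t} ≤ w_{s+1,t+1} + w_{s,t+1} + w_{s+1,t} for all (s,t) ∈ [T−1]×[U−1]; w_{T,t} ≤ w_{T,t+1} for all t ∈ [U−1]; and w_{s,U} ≤ w_{s+1,U} for all s ∈ [T−1]. -/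
theorem List.IsChain.exists_rel_of_mem_of_ne_getLast {α : Type*} {R : α → α → Prop}
    {l : List α} (h : l.IsChain R) {a : α} (ha : a ∈ l) (hne : l ≠ [])
    (hlast : a ≠ l.getLast hne) : ∃ b ∈ l, R a b := by
  obtain ⟨l₁, l₂, rfl⟩ := List.append_of_mem ha
  cases l₂ with
  | nil => simp at hlast
  | cons b l₂ =>
    exact ⟨b, by simp, List.isChain_iff_forall_rel_of_append_cons_cons.mp h rfl⟩

theorem List.IsChain.le_getLast_of_rel_imp_le {α : Type*} [Preorder α] {R : α → α → Prop}
    (hR : ∀ a b, R a b → a ≤ b) {l : List α} (h : l.IsChain R) (hne : l ≠ []) :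
    ∀ a ∈ l, a ≤ l.getLast hne :=
  h.backwards_induction (· ≤ l.getLast hne) l (fun _ _ hab hb => (hR _ _ hab).trans hb)
    (fun _ => le_rfl)

theorem IsWarpingList.getLast_eq {T U : ℕ} {l : List (ℕ × ℕ)} (hl : IsWarpingList T U l) :
    l.getLast hl.1 = (T, U) :=
  Option.some_inj.mp ((List.getLast?_eq_some_getLast hl.1).symm.trans hl.2.2.1)

namespace IsWarpingPath

variable {T U : ℕ} {p : Finset (ℕ × ℕ)}

theorem one_one_mem (hp : IsWarpingPath T U p) : (1, 1) ∈ p := by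
  obtain ⟨l, ⟨-, hhead, -⟩, rfl⟩ := hp
  exact List.mem_toFinset.mpr (List.mem_of_mem_head? hhead)

theorem le_of_mem (hp : IsWarpingPath T U p) {a : ℕ × ℕ} (ha : a ∈ p) : a ≤ (T, U) := by
  obtain ⟨l, hl, rfl⟩ := hp
  rw [← hl.getLast_eq]
  exact hl.2.2.2.le_getLast_of_rel_imp_le (fun _ _ => WStep.le) hl.1 a
    (List.mem_toFinset.mp ha)

theorem exists_wStep_of_mem (hp : IsWarpingPath T U p) {a : ℕ × ℕ} (ha : a ∈ p)
    (haTU : a ≠ (T, U)) : ∃ b ∈ p, WStep a b := by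
  obtain ⟨l, hl, rfl⟩ := hp
  simpa using hl.2.2.2.exists_rel_of_mem_of_ne_getLast (List.mem_toFinset.mp ha) hl.1
    (by rwa [hl.getLast_eq])

theorem succ_mem_of_mem (hp : IsWarpingPath T U p) {s t : ℕ} (hst : (s, t) ∈ p)
    (hne : (s, t) ≠ (T, U)) : (s + 1, t + 1) ∈ p ∨ (s, t + 1) ∈ p ∨ (s + 1, t) ∈ p := by
  obtain ⟨b, hb, rfl | rfl | rfl⟩ := hp.exists_wStep_of_mem hst hne <;> simp_all

theorem right_mem_of_mem_last_row (hp : IsWarpingPath T U p) {t : ℕ} (hTt : (T, t) ∈ p) (ht : t < U) :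
    (T, t + 1) ∈ p := by
  have hTU : (T + 1, t + 1) ∉ p ∧ (T + 1, t) ∉ p :=
    ⟨fun h => by simpa using (hp.le_of_mem h).1, fun h => by simpa using (hp.le_of_mem h).1⟩
  have := hp.succ_mem_of_mem hTt (by simpa using ht.ne)
  tauto

theorem down_mem_of_mem_last_col (hp : IsWarpingPath T U p) {s : ℕ} (hsU : (s, U) ∈ p) (hs : s < T) :
    (s + 1, U) ∈ p := by
  have hTU : (s + 1, U + 1) ∉ p ∧ (s, U + 1) ∉ p :=
    ⟨fun h => by simpa using (hp.le_of_mem h).2, fun h => by simpa using (hp.le_of_mem h).2⟩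
  have := hp.succ_mem_of_mem hsU (by simpa using hs.ne)
  tauto

end IsWarpingPath

theorem warping_path_indicator_constraints_general (T U : ℕ)
    (p : Finset (ℕ × ℕ)) (hp : IsWarpingPath T U p)
    (w : ℕ → ℕ → ℕ) (hw : ∀ s t, w s t = if (s, t) ∈ p then 1 else 0) :
    w 1 1 = 1 ∧
    (∀ s t, 1 ≤ s → s ≤ T - 1 → 1 ≤ t → t ≤ U - 1 →
      w s t ≤ w (s + 1) (t + 1) + w s (t + 1) + w (s + 1) t) ∧
    (∀ t, 1 ≤ t → t ≤ U - 1 → w T t ≤ w T (t + 1)) ∧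
    (∀ s, 1 ≤ s → s ≤ T - 1 → w s U ≤ w (s + 1) U) := by
  simp only [hw]
  refine ⟨if_pos hp.one_one_mem, fun s t _ hs _ _ => ?_, fun t _ ht => ?_, fun s _ hs => ?_⟩
  · by_cases hst : (s, t) ∈ p
    · have := hp.succ_mem_of_mem hst (ne_of_apply_ne Prod.fst (by omega))
      split_ifs <;> simp_all
    · simp [hst]
  · by_cases hTt : (T, t) ∈ p
    · simp [hTt, hp.right_mem_of_mem_last_row hTt (by omega)]
    · simp [hTt]
  · by_cases hsU : (s, U) ∈ p
    · simp [hsU, hp.down_mem_of_mem_last_col hsU (by omega)]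
    · simp [hsU]

/-- the 0/1-indicator `w` of a warping path `p` of order `T × U`
satisfies the constraints of the quadratic-programming formulation. -/
theorem warping_path_indicator_constraints (T U : ℕ) (hT : 1 ≤ T) (hU : 1 ≤ U)
    (p : Finset (ℕ × ℕ)) (hp : IsWarpingPath T U p)
    (w : ℕ → ℕ → ℕ) (hw : ∀ s t, w s t = if (s, t) ∈ p then 1 else 0) :
    w 1 1 = 1 ∧
    (∀ s t, 1 ≤ s → s ≤ T - 1 → 1 ≤ t → t ≤ U - 1 →
      w s t ≤ w (s + 1) (t + 1) + w s (t + 1) + w (s + 1) t) ∧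
    (∀ t, 1 ≤ t → t ≤ U - 1 → w T t ≤ w T (t + 1)) ∧
    (∀ s, 1 ≤ s → s ≤ T - 1 → w s U ≤ w (s + 1) U) :=
  warping_path_indicator_constraints_general T U p hp w hw
end

section
/- Let T, U ≥ 1 be integers and let w : [T]×[U] → {0,1} satisfy: w_{1,1} = 1; w_{s,t} ≤ w_{s+1,t+1} + w_{s,t+1} + w_{s+1,t} for all (s,t) ∈ [T−1]×[U−1]; w_{T,t} ≤ w_{T,t+1} for all t ∈ [U−1]; and w_{s,U} ≤ w_{s+1,U} for all s ∈ [T−1]. Then there exists a warping path p of order T×U with p ⊆ {(s,t) ∈ [T]×[U] : w_{s,t} = 1}. -/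
/-! The path is built greedily. The constraints guarantee that every point of the support of `w`
in `[T] × [U]` other than `(T, U)` has a warping-step successor in that support, and each step
strictly decreases the distance to `(T, U)`, so following successors from `(1, 1)` must end at
`(T, U)`. -/

theorem WStep.lt {a b : ℕ × ℕ} (h : WStep a b) : a.1 + a.2 < b.1 + b.2 := by
  rcases h with rfl | rfl | rfl <;> simp only <;> omega

theorem exists_chain_of_forall_exists_wStep {S : Set (ℕ × ℕ)} {b : ℕ × ℕ}
    (hSb : ∀ a ∈ S, a ≤ b) (hS : ∀ a ∈ S, a ≠ b → ∃ a' ∈ S, WStep a a')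
    {a : ℕ × ℕ} (ha : a ∈ S) :
    ∃ l : List (ℕ × ℕ), l.head? = some a ∧ l.getLast? = some b ∧ l.IsChain WStep ∧
      ∀ q ∈ l, q ∈ S := by
  by_cases hab : a = b
  · subst hab
    exact ⟨[a], rfl, rfl, List.isChain_singleton a, by simpa using ha⟩
  obtain ⟨a', ha', haa'⟩ := hS a ha hab
  obtain ⟨l, hhead, hlast, hchain, hmem⟩ := exists_chain_of_forall_exists_wStep hSb hS ha'
  obtain ⟨l', rfl⟩ : ∃ l', l = a' :: l' := by
    cases l <;> simp_all
  refine ⟨a :: a' :: l', rfl, ?_, List.isChain_cons_cons.mpr ⟨haa', hchain⟩, ?_⟩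
  · rwa [List.getLast?_cons_cons]
  · rintro q (_ | ⟨_, hq⟩)
    exacts [ha, hmem q hq]
termination_by (b.1 + b.2) - (a.1 + a.2)
decreasing_by
  have := haa'.lt
  have := Prod.mk_le_mk.mp (hSb a' ha')
  omega

def gridSupport (T U : ℕ) (w : ℕ → ℕ → ℕ) : Set (ℕ × ℕ) :=
  {q ∈ Set.Icc (1, 1) (T, U) | w q.1 q.2 = 1}

theorem mem_gridSupport {T U : ℕ} {w : ℕ → ℕ → ℕ} {q : ℕ × ℕ} :
    q ∈ gridSupport T U w ↔ q ∈ Set.Icc (1, 1) (T, U) ∧ w q.1 q.2 = 1 :=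
  Iff.rfl

theorem mk_mem_gridSupport {T U : ℕ} {w : ℕ → ℕ → ℕ} {s t : ℕ} (hs : 1 ≤ s) (ht : 1 ≤ t)
    (hsT : s ≤ T) (htU : t ≤ U) (hw : w s t = 1) : (s, t) ∈ gridSupport T U w :=
  mem_gridSupport.mpr ⟨⟨⟨hs, ht⟩, hsT, htU⟩, hw⟩

theorem exists_wStep_of_constraints {T U : ℕ} {w : ℕ → ℕ → ℕ}
    (hw01 : ∀ s t, w s t = 0 ∨ w s t = 1)
    (hstep : ∀ s t, 1 ≤ s → s ≤ T - 1 → 1 ≤ t → t ≤ U - 1 →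
      w s t ≤ w (s + 1) (t + 1) + w s (t + 1) + w (s + 1) t)
    (hlastrow : ∀ t, 1 ≤ t → t ≤ U - 1 → w T t ≤ w T (t + 1))
    (hlastcol : ∀ s, 1 ≤ s → s ≤ T - 1 → w s U ≤ w (s + 1) U)
    {a : ℕ × ℕ} (ha : a ∈ gridSupport T U w) (haTU : a ≠ (T, U)) :
    ∃ a' ∈ gridSupport T U w, WStep a a' := by
  obtain ⟨s, t⟩ := a
  obtain ⟨⟨⟨hs, ht⟩, hsT, htU⟩, hw⟩ := mem_gridSupport.mp ha
  dsimp only at hs ht hsT htU hw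
  have right (hsT : s ≤ T) (htU : t < U) (hw : w s (t + 1) = 1) :
      ∃ a' ∈ gridSupport T U w, WStep (s, t) a' :=
    ⟨_, mk_mem_gridSupport hs (by omega) hsT htU hw, Or.inr (Or.inl rfl)⟩
  have down (hsT : s < T) (htU : t ≤ U) (hw : w (s + 1) t = 1) :
      ∃ a' ∈ gridSupport T U w, WStep (s, t) a' :=
    ⟨_, mk_mem_gridSupport (by omega) ht hsT htU hw, Or.inr (Or.inr rfl)⟩
  by_cases hsT' : s = T
  · subst hsT'
    have htU' : t < U := by grind
    have := hlastrow t ht (by omega)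
    exact right le_rfl htU' (by grind)
  by_cases htU' : t = U
  · subst htU'
    have := hlastcol s hs (by omega)
    exact down (by omega) le_rfl (by grind)
  have := hstep s t hs (by omega) ht (by omega)
  rcases hw01 (s + 1) (t + 1) with _ | hdiag
  · rcases hw01 s (t + 1) with _ | hright
    · exact down (by omega) htU (by grind)
    · exact right hsT (by omega) hright
  · exact ⟨_, mk_mem_gridSupport (by omega) (by omega) (by omega) (by omega) hdiag, Or.inl rfl⟩

/-- any 0/1-valued `w` on `[T] × [U]` satisfying the constraints of
the quadratic-programming formulation contains (the indicator of) a warping path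
of order `T × U`. -/
theorem warping_path_from_constraints (T U : ℕ) (hT : 1 ≤ T) (hU : 1 ≤ U)
    (w : ℕ → ℕ → ℕ)
    (hw01 : ∀ s t, w s t = 0 ∨ w s t = 1)
    (h11 : w 1 1 = 1)
    (hstep : ∀ s t, 1 ≤ s → s ≤ T - 1 → 1 ≤ t → t ≤ U - 1 →
      w s t ≤ w (s + 1) (t + 1) + w s (t + 1) + w (s + 1) t)
    (hlastrow : ∀ t, 1 ≤ t → t ≤ U - 1 → w T t ≤ w T (t + 1))
    (hlastcol : ∀ s, 1 ≤ s → s ≤ T - 1 → w s U ≤ w (s + 1) U) :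
    ∃ p : Finset (ℕ × ℕ), IsWarpingPath T U p ∧ ∀ q ∈ p, w q.1 q.2 = 1 := by
  obtain ⟨l, hhead, hlast, hchain, hmem⟩ :=
    exists_chain_of_forall_exists_wStep (S := gridSupport T U w)
      (fun _ ha => (mem_gridSupport.mp ha).1.2) (fun _ ha haTU =>
        exists_wStep_of_constraints hw01 hstep hlastrow hlastcol ha haTU)
      (mk_mem_gridSupport le_rfl le_rfl hT hU h11)
  have hl : l ≠ [] := by rintro rfl; simp at hhead
  refine ⟨l.toFinset, ⟨l, ⟨hl, hhead, hlast, hchain⟩, rfl⟩, fun q hq => ?_⟩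
  exact (mem_gridSupport.mp (hmem q (List.mem_toFinset.mp hq))).2
end
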